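/- Exclusion of historical data when nowcasters dominate: let σ > 0 and 0 < c < (1+σ²)². For λ ∈ (0,1] define the second-best (discrimination) objective G_λ(n0,n1) = λ·V_S(n0,n1) + (1−λ)·V_L(n0,0) − c·(n0+n1) on [0,∞)×[0,∞). Then there exists λ̄ ∈ (0,1) such that for every λ ∈ (λ̄, 1], every maximizer (n0, n1) of G_λ over [0,∞)×[0,∞) satisfies n0 = 0 and n1 > 0. -/

import Mathlib

/-! Write `a = 1 + σ²`. Comparing a maximizer with `(0,0)` bounds `n0 + n1` by
`(1 + σ² + σ⁴)/c`. On that bounded region, moving all data into the nowcast, `(n0,n1) ↦ (0, n0+n1)`,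
raises `V_S` by at least `K n0` for some `K > 0`, while the forecaster term `V_L(n0,0)` it gives up
is at most `σ⁴ n0`; so once `λ K > (1 - λ) σ⁴` a maximizer has `n0 = 0`. Finally
`V_S(0,t) = a² t/(1 + a t)` has slope `a² > c` at `0`, so for `λ a² > c` small `t > 0` beats `(0,0)`. -/

/-- The denominator `D(n0,n1) = σ²(n0+n1+2 n0 n1) + (1+n0)(1+n1)`. -/
noncomputable def Dden (σ n0 n1 : ℝ) : ℝ :=
  σ^2 * (n0 + n1 + 2*n0*n1) + (1+n0)*(1+n1)

/-- Forecaster value `V_L`. -/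
noncomputable def VL (σ n0 n1 : ℝ) : ℝ :=
  σ^4 * (n0 + n1 + 2*n0*n1) / Dden σ n0 n1

/-- Nowcaster value `V_S`. -/
noncomputable def VS (σ n0 n1 : ℝ) : ℝ :=
  VL σ n0 n1 + (3*σ^2*n0*n1 + 2*σ^2*n1 + n1 + n0*n1) / Dden σ n0 n1

lemma Dden_eq (σ n0 n1 : ℝ) :
    Dden σ n0 n1 = 1 + (1+σ^2)*(n0+n1) + (1+2*σ^2)*(n0*n1) := by
  unfold Dden; ring

lemma Dden_pos {σ n0 n1 : ℝ} (h0 : 0 ≤ n0) (h1 : 0 ≤ n1) : 0 < Dden σ n0 n1 := by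
  rw [Dden_eq]; positivity

lemma Dden_le {σ n0 n1 B : ℝ} (h0 : 0 ≤ n0) (h1 : 0 ≤ n1) (hB : n0 + n1 ≤ B) :
    Dden σ n0 n1 ≤ 1 + (1+σ^2)*B + (1+2*σ^2)*B^2 := by
  rw [Dden_eq]
  have hprod : n0*n1 ≤ B^2 := by nlinarith
  gcongr

lemma VS_eq_div (σ n0 n1 : ℝ) : VS σ n0 n1 =
    (σ^4*(n0+n1+2*n0*n1) + (3*σ^2*n0*n1 + 2*σ^2*n1 + n1 + n0*n1)) / Dden σ n0 n1 := by
  unfold VS VL; rw [← add_div]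

lemma VS_zero_left (σ t : ℝ) : VS σ 0 t = (1+σ^2)^2 * t / (1 + (1+σ^2)*t) := by
  rw [VS_eq_div, Dden_eq]; congr 1 <;> ring

lemma VL_zero_right (σ n : ℝ) : VL σ n 0 = σ^4 * n / (1 + (1+σ^2)*n) := by
  unfold VL; rw [Dden_eq]; congr 1 <;> ring

lemma VS_nonneg {σ n0 n1 : ℝ} (h0 : 0 ≤ n0) (h1 : 0 ≤ n1) : 0 ≤ VS σ n0 n1 := by
  rw [VS_eq_div]
  exact div_nonneg (by positivity) (Dden_pos h0 h1).le

lemma VS_le {σ n0 n1 : ℝ} (h0 : 0 ≤ n0) (h1 : 0 ≤ n1) : VS σ n0 n1 ≤ 1 + σ^2 := by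
  rw [VS_eq_div, div_le_iff₀ (Dden_pos h0 h1), Dden]
  nlinarith [sq_nonneg σ, mul_nonneg (sq_nonneg σ) h0]

lemma VL_zero_right_nonneg {σ n : ℝ} (h : 0 ≤ n) : 0 ≤ VL σ n 0 := by
  rw [VL_zero_right]; positivity

lemma VL_zero_right_le {σ n : ℝ} (h : 0 ≤ n) : VL σ n 0 ≤ σ^4 := by
  rw [VL_zero_right, div_le_iff₀ (by positivity)]
  nlinarith [mul_nonneg (mul_nonneg (pow_nonneg (sq_nonneg σ) 2) (sq_nonneg σ)) h]

lemma VL_zero_right_le_mul {σ n : ℝ} (h : 0 ≤ n) : VL σ n 0 ≤ σ^4 * n := by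
  rw [VL_zero_right]
  exact div_le_self (by positivity) (by nlinarith [sq_nonneg σ])

lemma VS_sub_VS {σ n0 n1 : ℝ} (h0 : 0 ≤ n0) (h1 : 0 ≤ n1) :
    VS σ 0 (n0+n1) - VS σ n0 n1
      = n0*(1+2*σ^2)*(1+(1+σ^2)*n0) / (Dden σ n0 n1 * Dden σ 0 (n0+n1)) := by
  have hD₁ := (Dden_pos (σ := σ) h0 h1).ne'
  have hD₂ := (Dden_pos (σ := σ) le_rfl (add_nonneg h0 h1)).ne'
  rw [VS_eq_div, VS_eq_div, div_sub_div _ _ hD₂ hD₁,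
    div_eq_div_iff (mul_ne_zero hD₂ hD₁) (mul_ne_zero hD₁ hD₂)]
  unfold Dden
  ring

lemma exists_pos_mul_le_VS_sub_VS (σ : ℝ) {B : ℝ} (hB : 0 ≤ B) :
    ∃ K > 0, ∀ n0 n1 : ℝ, 0 ≤ n0 → 0 ≤ n1 → n0 + n1 ≤ B →
      K * n0 ≤ VS σ 0 (n0+n1) - VS σ n0 n1 := by
  set M := 1 + (1+σ^2)*B + (1+2*σ^2)*B^2
  have hM : 0 < M := by positivity
  refine ⟨(1+2*σ^2) / (M*M), by positivity, fun n0 n1 h0 h1 hs => ?_⟩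
  have hD₁ := Dden_pos (σ := σ) h0 h1
  have hD₂ := Dden_pos (σ := σ) le_rfl (add_nonneg h0 h1)
  have hnum : n0*(1+2*σ^2) ≤ n0*(1+2*σ^2)*(1+(1+σ^2)*n0) :=
    le_mul_of_one_le_right (by positivity) (by nlinarith [sq_nonneg σ])
  rw [VS_sub_VS h0 h1, mul_comm, ← mul_div_assoc]
  exact div_le_div₀ (by positivity) hnum (mul_pos hD₁ hD₂)
    (mul_le_mul (Dden_le h0 h1 hs) (Dden_le le_rfl (add_nonneg h0 h1) (by linarith))
      hD₂.le hM.le)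

/-- The second-best (discrimination) objective `G_λ`. -/
noncomputable def discrObjective (σ c lam n0 n1 : ℝ) : ℝ :=
  lam * VS σ n0 n1 + (1-lam) * VL σ n0 0 - c*(n0+n1)

lemma discrObjective_zero_zero (σ c lam : ℝ) : discrObjective σ c lam 0 0 = 0 := by
  simp [discrObjective, VS_zero_left, VL_zero_right]

lemma exists_discrObjective_zero_pos {σ c lam : ℝ} (hc : 0 < c) (hlam : c < lam*(1+σ^2)^2) :
    ∃ t, 0 ≤ t ∧ 0 < discrObjective σ c lam 0 t := by
  set a := 1 + σ^2
  have ha : 0 < a := by positivity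
  set t := (lam*a^2 - c) / (2*c*a)
  have ht : 0 < t := div_pos (by linarith) (by positivity)
  have hat : a*t = (lam*a^2 - c) / (2*c) := by
    simp only [t]; field_simp
  refine ⟨t, ht.le, ?_⟩
  have hden : 0 < 1 + a*t := by positivity
  have hct : c*(1 + a*t) = (c + lam*a^2) / 2 := by
    rw [mul_add, hat]; field_simp; ring
  have key : discrObjective σ c lam 0 t = t * ((lam*a^2 - c*(1 + a*t)) / (1 + a*t)) := by
    simp only [discrObjective, VS_zero_left, VL_zero_right]
    field_simp
    ring
  rw [key]
  exact mul_pos ht (div_pos (by linarith) hden)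

section Maximizer

variable {σ c lam n0 n1 : ℝ}
  (hmax : ∀ m0 m1 : ℝ, 0 ≤ m0 → 0 ≤ m1 →
    discrObjective σ c lam m0 m1 ≤ discrObjective σ c lam n0 n1)
include hmax

lemma add_le_of_isMax (hc : 0 < c) (hlam0 : 0 ≤ lam) (hlam1 : lam ≤ 1)
    (h0 : 0 ≤ n0) (h1 : 0 ≤ n1) : n0 + n1 ≤ (1+σ^2+σ^4) / c := by
  have h00 := hmax 0 0 le_rfl le_rfl
  rw [discrObjective_zero_zero, discrObjective] at h00
  have hVS : lam * VS σ n0 n1 ≤ 1+σ^2 := by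
    nlinarith [VS_le (σ := σ) h0 h1, VS_nonneg (σ := σ) h0 h1]
  have hVL : (1-lam) * VL σ n0 0 ≤ σ^4 := by
    nlinarith [VL_zero_right_le (σ := σ) h0, VL_zero_right_nonneg (σ := σ) h0,
      pow_nonneg (sq_nonneg σ) 2]
  rw [le_div_iff₀ hc]
  linarith

lemma eq_zero_of_isMax {K : ℝ} (hlam : σ^4 < lam*(σ^4+K)) (hlam0 : 0 ≤ lam) (hlam1 : lam ≤ 1)
    (h0 : 0 ≤ n0) (h1 : 0 ≤ n1) (hgain : K * n0 ≤ VS σ 0 (n0+n1) - VS σ n0 n1) :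
    n0 = 0 := by
  have hcmp := hmax 0 (n0+n1) le_rfl (add_nonneg h0 h1)
  simp only [discrObjective, zero_add] at hcmp
  rw [VL_zero_right, mul_zero, zero_div, mul_zero, add_zero] at hcmp
  have hVL := mul_le_mul_of_nonneg_left (VL_zero_right_le_mul (σ := σ) h0) (sub_nonneg.2 hlam1)
  have hK := mul_le_mul_of_nonneg_left hgain hlam0
  have : n0 * (lam*(σ^4+K) - σ^4) ≤ 0 := by nlinarith
  exact le_antisymm (nonpos_of_mul_nonpos_left this (by linarith)) h0

lemma pos_of_isMax (hc : 0 < c) (hlam : c < lam*(1+σ^2)^2) (hn0 : n0 = 0) (h1 : 0 ≤ n1) :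
    0 < n1 := by
  obtain ⟨t, ht, hpos⟩ := exists_discrObjective_zero_pos hc hlam
  refine lt_of_le_of_ne h1 fun h => ?_
  have := hmax 0 t le_rfl ht
  rw [hn0, ← h, discrObjective_zero_zero] at this
  linarith

end Maximizer

theorem stmt19_general (σ c : ℝ) (hc0 : 0 < c) (hc : c < (1+σ^2)^2) :
    ∃ lamBar : ℝ, lamBar ∈ Set.Ioo (0:ℝ) 1 ∧
      ∀ lam : ℝ, lamBar < lam → lam ≤ 1 →
        ∀ n0 n1 : ℝ, 0 ≤ n0 → 0 ≤ n1 →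
          (∀ m0 m1 : ℝ, 0 ≤ m0 → 0 ≤ m1 →
            lam * VS σ m0 m1 + (1-lam) * VL σ m0 0 - c*(m0+m1) ≤
            lam * VS σ n0 n1 + (1-lam) * VL σ n0 0 - c*(n0+n1)) →
          n0 = 0 ∧ 0 < n1 := by
  obtain ⟨K, hK, hgain⟩ := exists_pos_mul_le_VS_sub_VS σ (B := (1+σ^2+σ^4) / c) (by positivity)
  have hσK : 0 < σ^4 + K := by positivity
  have hbar : 0 < max (σ^4/(σ^4+K)) (c/(1+σ^2)^2) := lt_max_of_lt_right (by positivity)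
  refine ⟨_, ⟨hbar, max_lt ?_ ?_⟩, fun lam hlam hlam1 n0 n1 h0 h1 hmax => ?_⟩
  · exact (div_lt_one hσK).2 (by linarith)
  · exact (div_lt_one (by positivity)).2 hc
  have hlamK : σ^4 < lam*(σ^4+K) := (div_lt_iff₀ hσK).1 ((le_max_left _ _).trans_lt hlam)
  have hlamc : c < lam*(1+σ^2)^2 :=
    (div_lt_iff₀ (by positivity)).1 ((le_max_right _ _).trans_lt hlam)
  have hlam0 : 0 ≤ lam := (hbar.trans hlam).le
  have hs := add_le_of_isMax hmax hc0 hlam0 hlam1 h0 h1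
  have hn0 := eq_zero_of_isMax hmax hlamK hlam0 hlam1 h0 h1 (hgain n0 n1 h0 h1 hs)
  exact ⟨hn0, pos_of_isMax hmax hc0 hlamc hn0 h1⟩

/-- Exclusion of historical data when nowcasters dominate: for `λ` close enough
to `1`, every maximizer of the discrimination objective has `n0 = 0 < n1`. -/
theorem stmt19 (σ c : ℝ) (hσ : 0 < σ) (hc0 : 0 < c) (hc : c < (1+σ^2)^2) :
    ∃ lamBar : ℝ, lamBar ∈ Set.Ioo (0:ℝ) 1 ∧
      ∀ lam : ℝ, lamBar < lam → lam ≤ 1 →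
        ∀ n0 n1 : ℝ, 0 ≤ n0 → 0 ≤ n1 →
          (∀ m0 m1 : ℝ, 0 ≤ m0 → 0 ≤ m1 →
            lam * VS σ m0 m1 + (1-lam) * VL σ m0 0 - c*(m0+m1) ≤
            lam * VS σ n0 n1 + (1-lam) * VL σ n0 0 - c*(n0+n1)) →
          n0 = 0 ∧ 0 < n1 :=
  stmt19_general σ c hc0 hc
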